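/- arXiv:0705.1042 — 2 statements merged into one kernel-verified Lean document; each statement's English description precedes it below -/
import Mathlib

section
/- In a Ptolemy metric space with the midpoint property, the distance function to any point is midpoint convex: if m is a midpoint of x and y, then for every z, d(m,z) ≤ (d(x,z) + d(y,z))/2. -/
def IsPtolemy (X : Type*) [MetricSpace X] : Prop :=
  ∀ x y u v : X, dist x y * dist u v ≤ dist x u * dist y v + dist x v * dist y u

theorem ptolemy_midpoint_dist_convex {X : Type*} [MetricSpace X] (hX : IsPtolemy X)
    (hmid : ∀ x y : X, ∃ m : X, dist x m = dist x y / 2 ∧ dist m y = dist x y / 2)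
    (x y m : X) (hxm : dist x m = dist x y / 2) (hmy : dist m y = dist x y / 2) :
    ∀ z : X, dist m z ≤ (dist x z + dist y z) / 2 := by
  intro z
  rcases eq_or_lt_of_le (dist_nonneg (x := x) (y := y)) with h0 | hpos
  · have hxm0 : dist x m = 0 := by rw [hxm, ← h0]; ring
    have hxy : x = y := by rwa [eq_comm, dist_eq_zero] at h0
    have hmx : m = x := by rwa [dist_comm, dist_eq_zero] at hxm0
    subst hmx; subst hxy
    linarith [dist_nonneg (x := m) (y := z)]
  · have h := hX x y m z
    rw [hxm, dist_comm y m, hmy] at h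
    have h2 : dist x y * dist m z ≤ dist x y * ((dist x z + dist y z) / 2) := by
      nlinarith
    exact le_of_mul_le_mul_left h2 hpos
end

section
/- If X is a Ptolemy metric space, then the midpoint space M(X) — the set of unordered pairs of points of X with the metric D({x₁,x₂},{y₁,y₂}) = (1/4)∑d(xᵢ,yⱼ) for distinct pairs and 0 for equal pairs — is again a Ptolemy metric space. -/
/-- The averaged four-point sum on unordered pairs. -/
noncomputable def pairSum {X : Type*} [MetricSpace X] : Sym2 X → Sym2 X → ℝ :=
  Sym2.lift₂
    ⟨fun x₁ x₂ y₁ y₂ => (dist x₁ y₁ + dist x₁ y₂ + dist x₂ y₁ + dist x₂ y₂) / 4,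
     fun _ _ _ _ => ⟨by dsimp only; ring, by dsimp only; ring⟩⟩

open scoped Classical in
/-- The metric on the space of unordered pairs of the midpoint construction M(X). -/
noncomputable def pairDist {X : Type*} [MetricSpace X] (p q : Sym2 X) : ℝ :=
  if p = q then 0 else pairSum p q

lemma pairSum_mk {X : Type*} [MetricSpace X] (a b c d : X) :
    pairSum s(a, b) s(c, d) = (dist a c + dist a d + dist b c + dist b d) / 4 := rfl

lemma pairSum_nonneg {X : Type*} [MetricSpace X] (p q : Sym2 X) : 0 ≤ pairSum p q := by
  induction p using Sym2.inductionOn with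
  | hf a b =>
    induction q using Sym2.inductionOn with
    | hf c d =>
      rw [pairSum_mk]
      positivity

lemma pairSum_comm {X : Type*} [MetricSpace X] (p q : Sym2 X) : pairSum p q = pairSum q p := by
  induction p using Sym2.inductionOn with
  | hf a b =>
    induction q using Sym2.inductionOn with
    | hf c d =>
      rw [pairSum_mk, pairSum_mk, dist_comm a c, dist_comm a d, dist_comm b c, dist_comm b d]
      ring

lemma pairSum_ptolemy {X : Type*} [MetricSpace X] (hX : IsPtolemy X) (p q r s : Sym2 X) :
    pairSum p q * pairSum r s ≤ pairSum p r * pairSum q s + pairSum p s * pairSum q r := by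
  induction p using Sym2.inductionOn with
  | hf a₁ a₂ =>
  induction q using Sym2.inductionOn with
  | hf b₁ b₂ =>
  induction r using Sym2.inductionOn with
  | hf c₁ c₂ =>
  induction s using Sym2.inductionOn with
  | hf e₁ e₂ =>
  simp only [pairSum_mk]
  nlinarith [hX a₁ b₁ c₁ e₁, hX a₁ b₁ c₁ e₂, hX a₁ b₁ c₂ e₁, hX a₁ b₁ c₂ e₂,
    hX a₁ b₂ c₁ e₁, hX a₁ b₂ c₁ e₂, hX a₁ b₂ c₂ e₁, hX a₁ b₂ c₂ e₂,
    hX a₂ b₁ c₁ e₁, hX a₂ b₁ c₁ e₂, hX a₂ b₁ c₂ e₁, hX a₂ b₁ c₂ e₂,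
    hX a₂ b₂ c₁ e₁, hX a₂ b₂ c₁ e₂, hX a₂ b₂ c₂ e₁, hX a₂ b₂ c₂ e₂]

lemma pairDist_eq_zero {X : Type*} [MetricSpace X] {p q : Sym2 X} (h : p = q) :
    pairDist p q = 0 := by unfold pairDist; rw [if_pos h]

lemma pairDist_eq {X : Type*} [MetricSpace X] {p q : Sym2 X} (h : p ≠ q) :
    pairDist p q = pairSum p q := by unfold pairDist; rw [if_neg h]

lemma pairDist_nonneg {X : Type*} [MetricSpace X] (p q : Sym2 X) : 0 ≤ pairDist p q := by
  unfold pairDist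
  split
  · exact le_refl 0
  · exact pairSum_nonneg p q

theorem midpoint_space_ptolemy {X : Type*} [MetricSpace X] (hX : IsPtolemy X) :
    ∀ p q r s : Sym2 X,
      pairDist p q * pairDist r s ≤ pairDist p r * pairDist q s + pairDist p s * pairDist q r := by
  intro p q r s
  by_cases hpq : p = q
  · rw [pairDist_eq_zero hpq, zero_mul]
    exact add_nonneg (mul_nonneg (pairDist_nonneg _ _) (pairDist_nonneg _ _))
      (mul_nonneg (pairDist_nonneg _ _) (pairDist_nonneg _ _))
  by_cases hrs : r = s
  · rw [pairDist_eq_zero hrs, mul_zero]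
    exact add_nonneg (mul_nonneg (pairDist_nonneg _ _) (pairDist_nonneg _ _))
      (mul_nonneg (pairDist_nonneg _ _) (pairDist_nonneg _ _))
  rw [pairDist_eq hpq,
      pairDist_eq hrs]
  by_cases hpr : p = r
  · subst hpr
    have hps : p ≠ s := hrs
    have hqp : q ≠ p := fun h => hpq h.symm
    rw [pairDist_eq_zero rfl, zero_mul, zero_add,
        pairDist_eq hps,
        pairDist_eq hqp,
        pairSum_comm q p]
    nlinarith [pairSum_nonneg p q, pairSum_nonneg p s]
  by_cases hqs : q = s
  · subst hqs
    have hqr : q ≠ r := fun h => hrs h.symm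
    rw [pairDist_eq_zero rfl, mul_zero, zero_add,
        pairDist_eq hpq,
        pairDist_eq hqr,
        pairSum_comm r q]
  by_cases hps : p = s
  · subst hps
    have hqp : q ≠ p := fun h => hpq h.symm
    rw [pairDist_eq_zero rfl, zero_mul, add_zero,
        pairDist_eq hpr,
        pairDist_eq hqp,
        pairSum_comm r p, pairSum_comm q p]
    nlinarith [pairSum_nonneg p q, pairSum_nonneg p r]
  by_cases hqr : q = r
  · subst hqr
    rw [pairDist_eq_zero rfl, mul_zero, add_zero,
        pairDist_eq hpq,
        pairDist_eq hqs]
  rw [pairDist_eq hpr,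
      pairDist_eq hqs,
      pairDist_eq hps,
      pairDist_eq hqr]
  exact pairSum_ptolemy hX p q r s
end
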